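/- Closed-form single-antenna sum capacity (equation (29)): take N = 1 in the pinching-antenna channel model with K ≥ 1 users at w_k = (x_k, y_k, 0), and assume 0 ≤ x_k ≤ L_max for every k. Then the supremum of the average sum rate R̄(v,p) over all feasible transmission strategies (v,p) equals log₂(1 + (P·η/σ²)·Σ_{k=1}^K (y_k² + d²)^{-1}). -/

import Mathlib

open MeasureTheory

noncomputable section

/-- Euclidean distance between two points of ℝ³ (represented as `ℝ × ℝ × ℝ`). -/
def dist3 (a b : ℝ × ℝ × ℝ) : ℝ :=
  Real.sqrt ((a.1 - b.1) ^ 2 + (a.2.1 - b.2.1) ^ 2 + (a.2.2 - b.2.2) ^ 2)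

/-- Feasible set of antenna x-coordinates: `0 ≤ v 0`, successive gaps at least `Δ`,
and `v (N-1) ≤ Lmax`. -/
def Vfeas (N : ℕ) (Δ Lmax : ℝ) : Set (Fin N → ℝ) :=
  {v | (∀ i : Fin N, (i : ℕ) = 0 → 0 ≤ v i) ∧
       (∀ i j : Fin N, (j : ℕ) = (i : ℕ) + 1 → Δ ≤ v j - v i) ∧
       (∀ i : Fin N, (i : ℕ) = N - 1 → v i ≤ Lmax)}

/-- Effective channel coefficient `γ(v̄; w)` of the pinching-antenna system, with
`η = λ²/(16π²)`, antenna `n` at `(v n, 0, d)` and feed point at `(-Dx/2, 0, d)`. -/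
def gamma (N : ℕ) (lam lamg d Dx : ℝ) (v : Fin N → ℝ) (w : ℝ × ℝ × ℝ) : ℂ :=
  ∑ n : Fin N,
    Complex.exp (-(Complex.I) * ((2 * Real.pi / lamg * dist3 (v n, 0, d) (-Dx / 2, 0, d) : ℝ) : ℂ)) *
      (((Real.sqrt (lam ^ 2 / (16 * Real.pi ^ 2)) : ℝ) : ℂ) *
        Complex.exp (-(Complex.I) * ((2 * Real.pi / lam * dist3 (v n, 0, d) w : ℝ) : ℂ)) /
        ((dist3 (v n, 0, d) w : ℝ) : ℂ))

/-- Channel power gain `|γ(v̄; w)|²`. -/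
def gain (N : ℕ) (lam lamg d Dx : ℝ) (v : Fin N → ℝ) (w : ℝ × ℝ × ℝ) : ℝ :=
  ‖gamma N lam lamg d Dx v w‖ ^ 2

/-- A feasible transmission strategy: measurable antenna trajectory taking values in the
feasible set, measurable nonnegative powers with per-user average power budget `P`. -/
def Feasible (N K : ℕ) (Δ Lmax T P : ℝ)
    (v : ℝ → Fin N → ℝ) (p : ℝ → Fin K → ℝ) : Prop :=
  Measurable v ∧ Measurable p ∧
  (∀ t ∈ Set.Ioc (0 : ℝ) T, v t ∈ Vfeas N Δ Lmax) ∧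
  (∀ t ∈ Set.Ioc (0 : ℝ) T, ∀ k, 0 ≤ p t k) ∧
  (∀ k, ∫⁻ t in Set.Ioc (0 : ℝ) T, ENNReal.ofReal (p t k) ≤ ENNReal.ofReal (T * P))

/-- Average sum rate of a transmission strategy over the period `(0, T]`. -/
def avgRate (N K : ℕ) (lam lamg d Dx σ2 T : ℝ) (w : Fin K → ℝ × ℝ × ℝ)
    (v : ℝ → Fin N → ℝ) (p : ℝ → Fin K → ℝ) : ℝ :=
  (1 / T) * ∫ t in Set.Ioc (0 : ℝ) T,
    Real.logb 2 (1 + (∑ k, p t k * gain N lam lamg d Dx (v t) (w k)) / (N * σ2))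

end

/-! With a single antenna at `x = v`, user `k` sees the gain `η / ((v - x_k)² + y_k² + d²)`,
which is at most `η / (y_k² + d²)`, with equality when the antenna is right above the user. The
instantaneous SNR is therefore dominated by a quantity that is linear in the powers, and the
tangent line of the concave map `log (1 + ·)` at `c = P η σ⁻² ∑ (y_k² + d²)⁻¹`, integrated
against the power budgets, bounds the average rate by `log₂ (1 + c)`. Time sharing attains the
bound: serving one user at a time with the antenna above it makes the SNR constantly `c`. -/

open Real Set MeasureTheory Function

theorem Real.log_le_log_add_sub_div {x y : ℝ} (hx : 0 < x) (hy : 0 < y) :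
    log x ≤ log y + (x - y) / y := by
  have h := log_le_sub_one_of_pos (div_pos hx hy)
  rw [log_div hx.ne' hy.ne'] at h
  have e : x / y - 1 = (x - y) / y := by field_simp
  linarith

section Integrals

variable {α : Type*} [MeasurableSpace α] {μ : Measure α}

theorem integral_log_one_add_le [IsFiniteMeasure μ] {f g : α → ℝ} {c : ℝ} (hc : -1 < c)
    (hf : 0 ≤ᵐ[μ] f) (hfg : f ≤ᵐ[μ] g) (hg : Integrable g μ)
    (hgc : ∫ x, g x ∂μ ≤ μ.real univ * c) :
    ∫ x, log (1 + f x) ∂μ ≤ μ.real univ * log (1 + c) := by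
  have hc' : 0 < 1 + c := by linarith
  have hgc' : Integrable (fun x => (g x - c) / (1 + c)) μ :=
    (hg.sub (integrable_const c)).div_const _
  calc ∫ x, log (1 + f x) ∂μ
      ≤ ∫ x, (log (1 + c) + (g x - c) / (1 + c)) ∂μ := by
        refine integral_mono_of_nonneg ?_ ((integrable_const _).add hgc') ?_
        · filter_upwards [hf] with x (hx : 0 ≤ f x)
          exact log_nonneg (by linarith)
        · filter_upwards [hf, hfg] with x (hx : 0 ≤ f x) hxg
          have := log_le_log_add_sub_div (by linarith : 0 < 1 + f x) hc'
          have := div_le_div_of_nonneg_right (by linarith : 1 + f x - (1 + c) ≤ g x - c) hc'.le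
          linarith
    _ = μ.real univ * log (1 + c) + (∫ x, g x ∂μ - μ.real univ * c) / (1 + c) := by
        rw [integral_add (integrable_const _) hgc', integral_div,
          integral_sub hg (integrable_const c)]
        simp only [integral_const, smul_eq_mul]
    _ ≤ μ.real univ * log (1 + c) := by
        have : (∫ x, g x ∂μ - μ.real univ * c) / (1 + c) ≤ 0 :=
          div_nonpos_of_nonpos_of_nonneg (by linarith) hc'.le
        linarith

theorem integral_le_of_lintegral_ofReal_le {f : α → ℝ} {B : ℝ} (hB : 0 ≤ B) (hf : 0 ≤ᵐ[μ] f)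
    (hfm : AEStronglyMeasurable f μ)
    (h : ∫⁻ x, ENNReal.ofReal (f x) ∂μ ≤ ENNReal.ofReal B) : ∫ x, f x ∂μ ≤ B := by
  rw [integral_eq_lintegral_of_nonneg_ae hf hfm, ← ENNReal.toReal_ofReal hB]
  exact ENNReal.toReal_mono ENNReal.ofReal_ne_top h

theorem integrable_of_lintegral_ofReal_le {f : α → ℝ} {B : ℝ} (hf : 0 ≤ᵐ[μ] f)
    (hfm : AEStronglyMeasurable f μ)
    (h : ∫⁻ x, ENNReal.ofReal (f x) ∂μ ≤ ENNReal.ofReal B) : Integrable f μ :=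
  ⟨hfm, (hasFiniteIntegral_iff_ofReal hf).2 (h.trans_lt ENNReal.ofReal_lt_top)⟩

end Integrals

theorem gain_one_eq (lam lamg d Dx : ℝ) (v : Fin 1 → ℝ) {w : ℝ × ℝ × ℝ} (hw : w.2.2 = 0) :
    gain 1 lam lamg d Dx v w
      = lam ^ 2 / (16 * π ^ 2) / ((v 0 - w.1) ^ 2 + (w.2.1 ^ 2 + d ^ 2)) := by
  have hr : dist3 (v 0, 0, d) w = √((v 0 - w.1) ^ 2 + (w.2.1 ^ 2 + d ^ 2)) := by
    simp only [dist3, hw]; ring_nf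
  simp only [gain, gamma, Fin.sum_univ_one, norm_mul, norm_div, Complex.norm_exp,
    Complex.norm_real, Real.norm_eq_abs, hr, Complex.neg_re, Complex.mul_re, Complex.I_re,
    Complex.ofReal_re, Complex.ofReal_im, zero_mul, one_mul, mul_zero, sub_zero, neg_zero,
    Real.exp_zero, abs_of_nonneg (Real.sqrt_nonneg _)]
  rw [div_pow, mul_one, sq_sqrt (by positivity), sq_sqrt (by positivity)]

theorem gain_one_le (lam lamg Dx : ℝ) {d : ℝ} (hd : d ≠ 0) (v : Fin 1 → ℝ) {w : ℝ × ℝ × ℝ}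
    (hw : w.2.2 = 0) :
    gain 1 lam lamg d Dx v w ≤ lam ^ 2 / (16 * π ^ 2) / (w.2.1 ^ 2 + d ^ 2) := by
  rw [gain_one_eq lam lamg d Dx v hw]
  exact div_le_div_of_nonneg_left (by positivity)
    (add_pos_of_nonneg_of_pos (sq_nonneg _) (pow_two_pos_of_ne_zero hd))
    (le_add_of_nonneg_left (sq_nonneg _))

theorem gain_one_of_eq (lam lamg d Dx : ℝ) {v : Fin 1 → ℝ} {w : ℝ × ℝ × ℝ} (hw : w.2.2 = 0)
    (hv : v 0 = w.1) :
    gain 1 lam lamg d Dx v w = lam ^ 2 / (16 * π ^ 2) / (w.2.1 ^ 2 + d ^ 2) := by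
  rw [gain_one_eq lam lamg d Dx v hw, hv, sub_self, zero_pow two_ne_zero, zero_add]

theorem mem_Vfeas_one {Δ Lmax : ℝ} {v : Fin 1 → ℝ} : v ∈ Vfeas 1 Δ Lmax ↔ v 0 ∈ Icc 0 Lmax := by
  refine ⟨fun hv => ⟨hv.1 0 rfl, hv.2.2 0 rfl⟩, fun hv => ⟨?_, ?_, ?_⟩⟩
  · intro i _; rw [Subsingleton.elim i 0]; exact hv.1
  · intro i j hij; omega
  · intro i _; rw [Subsingleton.elim i 0]; exact hv.2

theorem exists_Ioc_partition {K : ℕ} (a : Fin K → ℝ) (ha : ∀ k, 0 ≤ a k) :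
    ∃ I : Fin K → Set ℝ, (∀ k, MeasurableSet (I k)) ∧ Pairwise (Disjoint on I) ∧
      (∀ k, volume (I k) = ENNReal.ofReal (a k)) ∧ ⋃ k, I k = Ioc 0 (∑ k, a k) := by
  set F : ℕ → ℝ := fun m => ∑ j ∈ Finset.univ.filter (fun j : Fin K => (j : ℕ) < m), a j
  have hF : Monotone F := fun m n hmn =>
    Finset.sum_le_sum_of_subset_of_nonneg
      (Finset.monotone_filter_right _ fun j _ (hj : (j : ℕ) < m) => hj.trans_le hmn)
      fun j _ _ => ha j
  have hF0 : F 0 = 0 := by simp [F]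
  have hFK : F K = ∑ k, a k := by simp [F]
  have hF_succ : ∀ k : Fin K, F (k + 1) = F k + a k := by
    intro k
    have : Finset.univ.filter (fun j : Fin K => (j : ℕ) < k + 1)
        = insert k (Finset.univ.filter fun j : Fin K => (j : ℕ) < k) := by
      ext j; simp only [Finset.mem_filter, Finset.mem_univ, true_and, Finset.mem_insert,
        Fin.ext_iff]; omega
    simp only [F, this]
    rw [Finset.sum_insert (by simp), add_comm]
  refine ⟨fun k => Ioc (F k) (F (k + 1)), fun _ => measurableSet_Ioc, ?_, ?_, ?_⟩
  · exact hF.pairwise_disjoint_on_Ioc_succ.comp_of_injective Fin.val_injective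
  · intro k
    rw [Real.volume_Ioc, hF_succ, add_sub_cancel_left]
  · ext t
    constructor
    · rintro ⟨_, ⟨k, rfl⟩, ht⟩
      rw [← hF0, ← hFK]
      exact Ioc_subset_Ioc (hF k.val.zero_le) (hF k.isLt) ht
    · intro ht
      rw [← hF0, ← hFK, ← hF.biUnion_Ico_Ioc_map_succ 0 K] at ht
      obtain ⟨i, hi, hti⟩ := mem_iUnion₂.1 ht
      exact mem_iUnion.2 ⟨⟨i, hi.2⟩, hti⟩

section TimeSharing

variable {ι β E : Type*} [Fintype ι] [AddCommMonoid E]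

noncomputable def timeShare (I : ι → Set β) (f : ι → E) (t : β) : E :=
  ∑ k, (I k).indicator (fun _ => f k) t

theorem timeShare_of_mem {I : ι → Set β} (hI : Pairwise (Disjoint on I)) (f : ι → E) {k : ι}
    {t : β} (ht : t ∈ I k) : timeShare I f t = f k := by
  rw [timeShare, Finset.sum_eq_single k (fun j _ hjk => ?_) (by simp), indicator_of_mem ht]
  exact indicator_of_notMem (fun htj => (hI hjk).notMem_of_mem_right ht htj) _

theorem measurable_timeShare [MeasurableSpace β] [MeasurableSpace E] [MeasurableAdd₂ E]
    {I : ι → Set β} (hI : ∀ k, MeasurableSet (I k)) (f : ι → E) : Measurable (timeShare I f) :=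
  Finset.measurable_sum _ fun k _ => measurable_const.indicator (hI k)

end TimeSharing
namespace Feasible

variable {N K : ℕ} {Δ Lmax T P : ℝ} {v : ℝ → Fin N → ℝ} {p : ℝ → Fin K → ℝ}

theorem ae_power_nonneg (hF : Feasible N K Δ Lmax T P v p) (k : Fin K) :
    0 ≤ᵐ[volume.restrict (Ioc 0 T)] fun t => p t k :=
  ae_restrict_of_forall_mem measurableSet_Ioc fun t ht => hF.2.2.2.1 t ht k

theorem integrableOn_power (hF : Feasible N K Δ Lmax T P v p) (k : Fin K) :
    IntegrableOn (fun t => p t k) (Ioc 0 T) :=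
  integrable_of_lintegral_ofReal_le (hF.ae_power_nonneg k)
    ((measurable_pi_apply k).comp hF.2.1).aestronglyMeasurable (hF.2.2.2.2 k)

theorem setIntegral_power_le (hF : Feasible N K Δ Lmax T P v p) (hTP : 0 ≤ T * P)
    (k : Fin K) : ∫ t in Ioc 0 T, p t k ≤ T * P :=
  integral_le_of_lintegral_ofReal_le hTP (hF.ae_power_nonneg k)
    ((measurable_pi_apply k).comp hF.2.1).aestronglyMeasurable (hF.2.2.2.2 k)

end Feasible

theorem sum_mul_gain_one_le {K : ℕ} (lam lamg Dx : ℝ) {d : ℝ} (hd : d ≠ 0)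
    {w : Fin K → ℝ × ℝ × ℝ} (hw : ∀ k, (w k).2.2 = 0) (v : Fin 1 → ℝ) {q : Fin K → ℝ}
    (hq : ∀ k, 0 ≤ q k) :
    ∑ k, q k * gain 1 lam lamg d Dx v (w k)
      ≤ lam ^ 2 / (16 * π ^ 2) * ∑ k, q k * ((w k).2.1 ^ 2 + d ^ 2)⁻¹ := by
  rw [Finset.mul_sum]
  refine Finset.sum_le_sum fun k _ => ?_
  calc q k * gain 1 lam lamg d Dx v (w k)
      ≤ q k * (lam ^ 2 / (16 * π ^ 2) / ((w k).2.1 ^ 2 + d ^ 2)) :=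
        mul_le_mul_of_nonneg_left (gain_one_le lam lamg Dx hd v (hw k)) (hq k)
    _ = lam ^ 2 / (16 * π ^ 2) * (q k * ((w k).2.1 ^ 2 + d ^ 2)⁻¹) := by ring

theorem avgRate_one_le {K : ℕ} {lam lamg d Dx Δ Lmax T P σ2 : ℝ} (hd : d ≠ 0) (hT : 0 < T)
    (hP : 0 ≤ P) (hσ : 0 ≤ σ2) {w : Fin K → ℝ × ℝ × ℝ} (hw : ∀ k, (w k).2.2 = 0)
    {v : ℝ → Fin 1 → ℝ} {p : ℝ → Fin K → ℝ} (hF : Feasible 1 K Δ Lmax T P v p) :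
    avgRate 1 K lam lamg d Dx σ2 T w v p
      ≤ logb 2 (1 + P * (lam ^ 2 / (16 * π ^ 2)) / σ2 * ∑ k, ((w k).2.1 ^ 2 + d ^ 2)⁻¹) := by
  set η := lam ^ 2 / (16 * π ^ 2)
  set s : Fin K → ℝ := fun k => ((w k).2.1 ^ 2 + d ^ 2)⁻¹
  set μ := volume.restrict (Ioc 0 T)
  have hμ : μ.real univ = T := by
    rw [measureReal_restrict_apply_univ, Real.volume_real_Ioc, sub_zero, max_eq_left hT.le]
  have hpint : ∀ k, Integrable (fun t => p t k * s k) μ := fun k =>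
    (hF.integrableOn_power k).mul_const (s k)
  have hg : Integrable (fun t => η * (∑ k, p t k * s k) / σ2) μ :=
    ((integrable_finsetSum _ fun k _ => hpint k).const_mul η).div_const σ2
  have hgc : ∫ t, η * (∑ k, p t k * s k) / σ2 ∂μ ≤ μ.real univ * (P * η / σ2 * ∑ k, s k) := by
    rw [integral_div, integral_const_mul, integral_finsetSum _ fun k _ => hpint k, hμ]
    simp only [integral_mul_const]
    calc η * (∑ k, (∫ t, p t k ∂μ) * s k) / σ2 ≤ η * (∑ k, T * P * s k) / σ2 := by
          gcongr with k
          exact hF.setIntegral_power_le (by positivity) k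
      _ = T * (P * η / σ2 * ∑ k, s k) := by rw [← Finset.mul_sum]; ring
  have hSNR : ∀ t ∈ Ioc 0 T,
      0 ≤ (∑ k, p t k * gain 1 lam lamg d Dx (v t) (w k)) / ((1 : ℕ) * σ2) ∧
      (∑ k, p t k * gain 1 lam lamg d Dx (v t) (w k)) / ((1 : ℕ) * σ2)
        ≤ η * (∑ k, p t k * s k) / σ2 := by
    intro t ht
    have hp := hF.2.2.2.1 t ht
    rw [Nat.cast_one, one_mul]
    exact ⟨div_nonneg (Finset.sum_nonneg fun k _ => mul_nonneg (hp k) (sq_nonneg _)) hσ,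
      div_le_div_of_nonneg_right (sum_mul_gain_one_le lam lamg Dx hd hw (v t) hp) hσ⟩
  rw [avgRate]
  simp only [logb, integral_div, ← mul_div_assoc]
  gcongr
  rw [one_div, inv_mul_le_iff₀ hT]
  refine (integral_log_one_add_le (neg_one_lt_zero.trans_le (by positivity))
    (ae_restrict_of_forall_mem measurableSet_Ioc fun t ht => (hSNR t ht).1)
    (ae_restrict_of_forall_mem measurableSet_Ioc fun t ht => (hSNR t ht).2) hg hgc).trans_eq ?_
  rw [hμ]

theorem feasible_timeShare {N K : ℕ} {Δ Lmax T P : ℝ} {I : Fin K → Set ℝ}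
    (hIm : ∀ k, MeasurableSet (I k)) (hId : Pairwise (Disjoint on I))
    (hIU : Ioc 0 T ⊆ ⋃ k, I k) {u : Fin K → Fin N → ℝ} (hu : ∀ k, u k ∈ Vfeas N Δ Lmax)
    {q : Fin K → ℝ} (hq : ∀ k, 0 ≤ q k)
    (hbudget : ∀ k, ENNReal.ofReal (q k) * volume (I k) ≤ ENNReal.ofReal (T * P)) :
    Feasible N K Δ Lmax T P (timeShare I u) fun t k => (I k).indicator (fun _ => q k) t := by
  refine ⟨measurable_timeShare hIm u, measurable_pi_lambda _ fun k =>
    measurable_const.indicator (hIm k), fun t ht => ?_,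
    fun t _ k => indicator_nonneg (fun _ _ => hq k) t, fun k => ?_⟩
  · obtain ⟨k, htk⟩ := mem_iUnion.1 (hIU ht)
    rw [timeShare_of_mem hId u htk]
    exact hu k
  · calc ∫⁻ t in Ioc 0 T, ENNReal.ofReal ((I k).indicator (fun _ => q k) t)
        ≤ ∫⁻ t, (I k).indicator (fun _ => ENNReal.ofReal (q k)) t := by
          rw [comp_indicator_const (q k) ENNReal.ofReal ENNReal.ofReal_zero]
          exact setLIntegral_le_lintegral _ _
      _ ≤ ENNReal.ofReal (T * P) := by
          rw [lintegral_indicator_const (hIm k)]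
          exact hbudget k

theorem avgRate_timeShare {N K : ℕ} {lam lamg d Dx σ2 T c : ℝ} (hT : 0 < T) {I : Fin K → Set ℝ}
    (hId : Pairwise (Disjoint on I)) (hIU : Ioc 0 T ⊆ ⋃ k, I k) {u : Fin K → Fin N → ℝ}
    {q : Fin K → ℝ} {w : Fin K → ℝ × ℝ × ℝ}
    (hsnr : ∀ k, q k * gain N lam lamg d Dx (u k) (w k) / (N * σ2) = c) :
    avgRate N K lam lamg d Dx σ2 T w (timeShare I u) (fun t k => (I k).indicator (fun _ => q k) t)
      = logb 2 (1 + c) := by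
  rw [avgRate, setIntegral_congr_fun measurableSet_Ioc (g := fun _ => logb 2 (1 + c))
    fun t ht => ?_, setIntegral_const, Real.volume_real_Ioc, sub_zero, max_eq_left hT.le,
    smul_eq_mul, one_div, inv_mul_cancel_left₀ hT.ne']
  obtain ⟨k, htk⟩ := mem_iUnion.1 (hIU ht)
  rw [Finset.sum_eq_single k (fun j _ hjk => ?_) (by simp), indicator_of_mem htk,
    timeShare_of_mem hId u htk, hsnr]
  rw [indicator_of_notMem (fun htj => (hId hjk).notMem_of_mem_right htk htj), zero_mul]

theorem exists_feasible_avgRate_one_eq {K : ℕ} (hK : 1 ≤ K) {lam lamg d Dx Δ Lmax T P σ2 : ℝ}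
    (hd : d ≠ 0) (hT : 0 < T) (hP : 0 ≤ P) {w : Fin K → ℝ × ℝ × ℝ} (hw : ∀ k, (w k).2.2 = 0)
    (hx : ∀ k, (w k).1 ∈ Icc 0 Lmax) :
    ∃ v p, Feasible 1 K Δ Lmax T P v p ∧ avgRate 1 K lam lamg d Dx σ2 T w v p
      = logb 2 (1 + P * (lam ^ 2 / (16 * π ^ 2)) / σ2 * ∑ k, ((w k).2.1 ^ 2 + d ^ 2)⁻¹) := by
  set s : Fin K → ℝ := fun k => ((w k).2.1 ^ 2 + d ^ 2)⁻¹
  have hs : ∀ k, 0 < s k := fun k =>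
    inv_pos.2 (add_pos_of_nonneg_of_pos (sq_nonneg _) (pow_two_pos_of_ne_zero hd))
  have hS : 0 < ∑ k, s k := Finset.sum_pos (fun k _ => hs k) ⟨⟨0, hK⟩, Finset.mem_univ _⟩
  -- user `k` is served alone, with the antenna above it, for a fraction `s k / ∑ s` of the time
  obtain ⟨I, hIm, hId, hIvol, hIU⟩ :=
    exists_Ioc_partition (fun k => T * s k / ∑ j, s j) fun k => by have := hs k; positivity
  rw [← Finset.sum_div, ← Finset.mul_sum, mul_div_cancel_right₀ _ hS.ne'] at hIU
  set q : Fin K → ℝ := fun k => P * (∑ j, s j) / s k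
  have hq : ∀ k, 0 ≤ q k := fun k => by have := hs k; positivity
  refine ⟨_, _, feasible_timeShare hIm hId hIU.ge (u := fun k _ => (w k).1)
    (fun k => mem_Vfeas_one.2 (hx k)) hq fun k => ?_, avgRate_timeShare hT hId hIU.ge fun k => ?_⟩
  all_goals have := (hs k).ne'
  · rw [hIvol, ← ENNReal.ofReal_mul (hq k)]
    exact ENNReal.ofReal_le_ofReal (le_of_eq (by simp only [q]; field_simp))
  · rw [gain_one_of_eq lam lamg d Dx (hw k) rfl, Nat.cast_one, one_mul]
    simp only [q, s]
    field_simp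

theorem single_antenna_sum_capacity_general
    (K : ℕ) (hK : 1 ≤ K)
    (lam lamg d Dx Δ Lmax T P σ2 : ℝ)
    (hd : 0 < d)
    (hT : 0 < T) (hP : 0 < P) (hσ : 0 < σ2)
    (w : Fin K → ℝ × ℝ × ℝ) (hw : ∀ k, (w k).2.2 = 0)
    (hx : ∀ k, (w k).1 ∈ Set.Icc (0 : ℝ) Lmax) :
    sSup {r : ℝ | ∃ v p, Feasible 1 K Δ Lmax T P v p ∧
        r = avgRate 1 K lam lamg d Dx σ2 T w v p}
      = Real.logb 2
          (1 + P * (lam ^ 2 / (16 * Real.pi ^ 2)) / σ2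
              * ∑ k, ((w k).2.1 ^ 2 + d ^ 2)⁻¹) := by
  obtain ⟨v, p, hF, hrate⟩ :=
    exists_feasible_avgRate_one_eq (Δ := Δ) (lamg := lamg) (Dx := Dx) (σ2 := σ2) hK hd.ne' hT
      hP.le hw hx
  refine IsGreatest.csSup_eq ⟨⟨v, p, hF, hrate.symm⟩, ?_⟩
  rintro r ⟨v, p, hF, rfl⟩
  exact avgRate_one_le hd.ne' hT hP.le hσ.le hw hF

/-- closed-form single-antenna sum capacity, equation (29).
For `N = 1` with all users' x-coordinates inside `[0, Lmax]`, the supremum of the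
average sum rate over all feasible transmission strategies equals
`log₂(1 + (P η / σ²) ∑ k, (y_k² + d²)⁻¹)` with `η = λ²/(16π²)`. -/
theorem single_antenna_sum_capacity
    (K : ℕ) (hK : 1 ≤ K)
    (lam lamg d Dx Δ Lmax T P σ2 : ℝ)
    (hlam : 0 < lam) (hlamg : 0 < lamg) (hd : 0 < d) (hΔ : 0 < Δ)
    (hLmax : 0 < Lmax) (hT : 0 < T) (hP : 0 < P) (hσ : 0 < σ2)
    (w : Fin K → ℝ × ℝ × ℝ) (hw : ∀ k, (w k).2.2 = 0)
    (hx : ∀ k, (w k).1 ∈ Set.Icc (0 : ℝ) Lmax) :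
    sSup {r : ℝ | ∃ v p, Feasible 1 K Δ Lmax T P v p ∧
        r = avgRate 1 K lam lamg d Dx σ2 T w v p}
      = Real.logb 2
          (1 + P * (lam ^ 2 / (16 * Real.pi ^ 2)) / σ2
              * ∑ k, ((w k).2.1 ^ 2 + d ^ 2)⁻¹) :=
  single_antenna_sum_capacity_general K hK lam lamg d Dx Δ Lmax T P σ2 hd hT hP hσ w hw hx
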